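/- Let c ∈ ℂ⁴ and define ψ₀ : ℝ³ → ℂ⁴ by ψ₀(x) = exp(e^{1−|x|}) c. Then for every x ∈ ℝ³ with x ≠ 0, −i Σ_{j=1}^3 α_j ∂_jψ₀(x) = e · e^{−|x|} · i (α·x̂) ψ₀(x); equivalently, ψ₀ solves the Euler–Lagrange equation −iα·∇ψ₀ + e (−i α·x̂) e^{−|x|} ((1+2S·L)ψ₀) = 0 on ℝ³∖{0}. -/

import Mathlib

open MeasureTheory Real ComplexConjugate
open scoped InnerProductSpace

noncomputable section

abbrev R3 := EuclideanSpace ℝ (Fin 3)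
abbrev C4 := EuclideanSpace ℂ (Fin 4)

/-- The Pauli matrices. -/
def pauli : Fin 3 → Matrix (Fin 2) (Fin 2) ℂ
  | 0 => !![0, 1; 1, 0]
  | 1 => !![0, -Complex.I; Complex.I, 0]
  | 2 => !![1, 0; 0, -1]

/-- Reindex a 2×2 block matrix as a 4×4 matrix. -/
def blocks4 (A B C D : Matrix (Fin 2) (Fin 2) ℂ) : Matrix (Fin 4) (Fin 4) ℂ :=
  Matrix.reindex finSumFinEquiv finSumFinEquiv (Matrix.fromBlocks A B C D)

/-- The Dirac alpha matrices. -/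
def diracAlpha (j : Fin 3) : Matrix (Fin 4) (Fin 4) ℂ :=
  blocks4 0 (pauli j) (pauli j) 0

/-- The Dirac beta matrix. -/
def diracBeta : Matrix (Fin 4) (Fin 4) ℂ :=
  blocks4 1 0 0 (-1)

/-- The spin matrices Sⱼ. -/
def spinS (j : Fin 3) : Matrix (Fin 4) (Fin 4) ℂ :=
  (1/2 : ℂ) • blocks4 (pauli j) 0 0 (pauli j)

/-- Action of a 4×4 complex matrix on ℂ⁴. -/
def act (M : Matrix (Fin 4) (Fin 4) ℂ) (v : C4) : C4 :=
  WithLp.toLp 2 (M.mulVec v)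

/-- Partial derivative of a ℂ⁴-valued function on ℝ³. -/
def pderiv3 (j : Fin 3) (ψ : R3 → C4) (x : R3) : C4 :=
  fderiv ℝ ψ x (EuclideanSpace.single j 1)

/-- The free Dirac operator with mass m. -/
def diracOp (m : ℝ) (ψ : R3 → C4) (x : R3) : C4 :=
  (-Complex.I) • ∑ j, act (diracAlpha j) (pderiv3 j ψ x) + (m : ℂ) • act diracBeta (ψ x)

/-- The massless Dirac operator `-iα·∇`. -/
def masslessDirac (ψ : R3 → C4) (x : R3) : C4 :=
  (-Complex.I) • ∑ j, act (diracAlpha j) (pderiv3 j ψ x)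

/-- The orbital angular momentum component Lⱼψ = −i (x × ∇ψ)ⱼ. -/
def orbL (j : Fin 3) (ψ : R3 → C4) (x : R3) : C4 :=
  (-Complex.I) • ((x (j + 1) : ℂ) • pderiv3 (j + 2) ψ x - (x (j + 2) : ℂ) • pderiv3 (j + 1) ψ x)

/-- The spin-orbit operator (1 + 2 S·L). -/
def spinOrbit (ψ : R3 → C4) (x : R3) : C4 :=
  ψ x + (2 : ℂ) • ∑ j, act (spinS j) (orbL j ψ x)

/-- The radial derivative of a scalar function on ℝ³. -/
def radialDeriv (f : R3 → ℝ) (x : R3) : ℝ :=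
  ∑ j, (x j / ‖x‖) * fderiv ℝ f x (EuclideanSpace.single j 1)

/-- The radial derivative of a ℂ⁴-valued function on ℝ³. -/
def radialDerivV (ψ : R3 → C4) (x : R3) : C4 :=
  ∑ j, ((x j / ‖x‖ : ℝ) : ℂ) • pderiv3 j ψ x

/-- α·x̂, the Dirac matrix contracted with the unit radial vector. -/
def alphaHat (x : R3) : Matrix (Fin 4) (Fin 4) ℂ :=
  ∑ j, ((x j / ‖x‖ : ℝ) : ℂ) • diracAlpha j

/-- A function on ℝ³ is radial if it depends only on the norm of its argument. -/
def IsRadial {E : Type*} (f : R3 → E) : Prop :=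
  ∀ x y : R3, ‖x‖ = ‖y‖ → f x = f y

/-!
Write `ψ₀ y = f ‖y‖ • c` with `f r = exp (exp (1 - r))`. Away from the origin the chain rule gives
`∂ⱼψ₀ = f'(‖x‖) (xⱼ / ‖x‖) • c`, so `-iα·∇ψ₀ = -i f'(‖x‖) (α·x̂) c`, and `f' = -e^{1-r} f` turns this
into the first identity. The gradient of a radial function is parallel to `x`, so every component
of `x × ∇ψ₀` vanishes: `(1 + 2S·L)ψ₀ = ψ₀`, and the Euler–Lagrange equation is the first identity
again.
-/

theorem hasFDerivAt_norm_of_ne_zero {E : Type*} [NormedAddCommGroup E] [InnerProductSpace ℝ E]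
    {x : E} (hx : x ≠ 0) : HasFDerivAt (‖·‖) (‖x‖⁻¹ • innerSL ℝ x) x := by
  have h := (hasStrictFDerivAt_norm_sq x).hasFDerivAt.sqrt (by simpa using hx)
  simp only [Real.sqrt_sq (norm_nonneg _)] at h
  convert h using 1
  ext v
  simp only [smul_apply, smul_eq_mul, nsmul_eq_mul, Nat.cast_ofNat]
  field_simp

theorem act_eq_toLpLin (M : Matrix (Fin 4) (Fin 4) ℂ) (v : C4) :
    act M v = Matrix.toLpLin 2 2 M v :=
  rfl

section Radial

variable {f : ℝ → ℝ} {f' : ℝ} {x : R3}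

theorem pderiv3_radial_smul (hx : x ≠ 0) (hf : HasDerivAt f f' ‖x‖) (c : C4) (j : Fin 3) :
    pderiv3 j (fun y ↦ (f ‖y‖ : ℂ) • c) x = ((f' * (x j / ‖x‖) : ℝ) : ℂ) • c := by
  have h : HasFDerivAt (fun y : R3 ↦ (f ‖y‖ : ℂ) • c) _ x :=
    (Complex.ofRealCLM.hasFDerivAt.comp x
      (hf.comp_hasFDerivAt x (hasFDerivAt_norm_of_ne_zero hx))).smul_const c
  rw [pderiv3, h.fderiv]
  simp [EuclideanSpace.inner_single_right, div_eq_inv_mul, mul_comm]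

theorem masslessDirac_radial_smul (hx : x ≠ 0) (hf : HasDerivAt f f' ‖x‖) (c : C4) :
    masslessDirac (fun y ↦ (f ‖y‖ : ℂ) • c) x = (-Complex.I * f') • act (alphaHat x) c := by
  simp only [masslessDirac, alphaHat, pderiv3_radial_smul hx hf, act_eq_toLpLin, map_smul, map_sum,
    LinearMap.sum_apply, LinearMap.smul_apply, Finset.smul_sum, smul_smul]
  refine Finset.sum_congr rfl fun j _ ↦ ?_
  push_cast
  ring

theorem orbL_radial_smul (hx : x ≠ 0) (hf : HasDerivAt f f' ‖x‖) (c : C4) (j : Fin 3) :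
    orbL j (fun y ↦ (f ‖y‖ : ℂ) • c) x = 0 := by
  simp only [orbL, pderiv3_radial_smul hx hf, smul_smul, ← sub_smul]
  refine smul_eq_zero_of_left ?_ c
  push_cast
  ring

theorem spinOrbit_radial_smul (hx : x ≠ 0) (hf : HasDerivAt f f' ‖x‖) (c : C4) :
    spinOrbit (fun y ↦ (f ‖y‖ : ℂ) • c) x = (f ‖x‖ : ℂ) • c := by
  simp only [spinOrbit, orbL_radial_smul hx hf, act_eq_toLpLin, map_zero, Finset.sum_const_zero,
    smul_zero, add_zero]

end Radial

/-- The exponential-weight minimiser solves the Euler-Lagrange equation. -/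
theorem euler_lagrange_exponential (c : C4) (ψ₀ : R3 → C4)
    (hψ₀ : ∀ x : R3, ψ₀ x = (Real.exp (Real.exp (1 - ‖x‖)) : ℂ) • c)
    (x : R3) (hx : x ≠ 0) :
    masslessDirac ψ₀ x =
        ((Real.exp 1 * Real.exp (-‖x‖) : ℝ) : ℂ) •
          (Complex.I • act (alphaHat x) (ψ₀ x)) ∧
      masslessDirac ψ₀ x + (Real.exp 1 : ℂ) •
        ((-Complex.I) • act (alphaHat x)
          (((Real.exp (-‖x‖) : ℝ) : ℂ) • spinOrbit ψ₀ x)) = 0 := by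
  set f : ℝ → ℝ := fun r ↦ Real.exp (Real.exp (1 - r))
  have hψ : ψ₀ = fun y ↦ (f ‖y‖ : ℂ) • c := funext hψ₀
  have hf : HasDerivAt f (f ‖x‖ * (Real.exp (1 - ‖x‖) * -1)) ‖x‖ :=
    ((hasDerivAt_id _).const_sub 1).exp.exp
  have hexp : Real.exp 1 * Real.exp (-‖x‖) = Real.exp (1 - ‖x‖) := by
    rw [← Real.exp_add, sub_eq_add_neg]
  have hdirac : masslessDirac ψ₀ x =
      ((Real.exp 1 * Real.exp (-‖x‖) : ℝ) : ℂ) • (Complex.I • act (alphaHat x) (ψ₀ x)) := by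
    rw [hψ, masslessDirac_radial_smul hx hf, hexp]
    simp only [act_eq_toLpLin, map_smul, smul_smul]
    congr 1
    push_cast
    ring
  refine ⟨hdirac, ?_⟩
  rw [hdirac, hψ, spinOrbit_radial_smul hx hf]
  simp only [act_eq_toLpLin, map_smul, smul_smul, ← add_smul]
  refine smul_eq_zero_of_left ?_ _
  push_cast
  ring
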